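/- arXiv:1006.2632 — 2 statements merged into one kernel-verified Lean document; each statement's English description precedes it below -/
import Mathlib

section
/- Let p be a prime with p ≡ 1 (mod 3) and let K/Q_p be a totally ramified cubic abelian extension. Then a p-adic unit u in Z_p^* is a norm from K^* if and only if (u mod p) is a cube in F_p^*. -/
/-!
Since `p ≡ 1 (mod 3)`, Hensel's lemma puts a primitive cube root of unity in `ℚ_p`, so by Kummer
theory `K = ℚ_p(θ)` with `θ³ = a ∈ ℚ_p`, and the norm of `c₀ + c₁θ + c₂θ²` is the cubic form
`c₀³ + a c₁³ + a² c₂³ - 3a c₀c₁c₂`. If `3 ∣ v(a)`, rescaling makes `a` a unit that is not a cube,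
hence not a cube mod `p` by Hensel; the form is then anisotropic mod `p`, so all its values have
valuation divisible by 3 and `p · unit` is not a norm, against total ramification. So `3 ∤ v(a)`:
the terms `c₀³, a c₁³, a² c₂³` have valuations in distinct classes mod 3 and dominate the last
term, so a unit norm forces `c₀` to be a unit with `u ≡ c₀³ (mod p)`. Conversely, a unit that is a
cube mod `p` is a cube in `ℤ_p` by Hensel, hence the norm of its cube root.
-/

open Polynomial IntermediateField PadicInt

section CubicNormForm

variable {R : Type*} [CommRing R]

def cubicNormForm (a x₀ x₁ x₂ : R) : R :=
  x₀ ^ 3 + a * x₁ ^ 3 + a ^ 2 * x₂ ^ 3 - 3 * a * (x₀ * x₁ * x₂)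

theorem map_cubicNormForm {S : Type*} [CommRing S] (f : R →+* S) (a x₀ x₁ x₂ : R) :
    f (cubicNormForm a x₀ x₁ x₂) = cubicNormForm (f a) (f x₀) (f x₁) (f x₂) := by
  simp only [cubicNormForm, map_sub, map_add, map_mul, map_pow, map_ofNat]

theorem cubicNormForm_mul_cube (t a x₀ x₁ x₂ : R) :
    cubicNormForm (t ^ 3 * a) x₀ x₁ x₂ = cubicNormForm a x₀ (t * x₁) (t ^ 2 * x₂) := by
  unfold cubicNormForm; ring

theorem cubicNormForm_mul (t a x₀ x₁ x₂ : R) :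
    cubicNormForm a (t * x₀) (t * x₁) (t * x₂) = t ^ 3 * cubicNormForm a x₀ x₁ x₂ := by
  unfold cubicNormForm; ring

theorem prod_range_three_eq_cubicNormForm {z θ a : R} (hz : z ^ 2 + z + 1 = 0) (hθ : θ ^ 3 = a)
    (c₀ c₁ c₂ : R) :
    ∏ i ∈ Finset.range 3, (c₀ + c₁ * (z ^ i * θ) + c₂ * (z ^ i * θ) ^ 2) =
      cubicNormForm a c₀ c₁ c₂ := by
  simp only [Finset.prod_range_succ, Finset.prod_range_zero, cubicNormForm]
  grind

theorem cubicNormForm_eq_zero_iff {F : Type*} [Field F] {a : F} (ha : ∀ c, c ^ 3 ≠ a)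
    {x₀ x₁ x₂ : F} : cubicNormForm a x₀ x₁ x₂ = 0 ↔ x₀ = 0 ∧ x₁ = 0 ∧ x₂ = 0 := by
  refine ⟨fun h => ?_, by rintro ⟨rfl, rfl, rfl⟩; simp [cubicNormForm]⟩
  have ha₀ : a ≠ 0 := fun h₀ => ha 0 (by simp [h₀])
  have eq_zero_of_cube_eq : ∀ X Y : F, X ^ 3 = a * Y ^ 3 → Y = 0 := fun X Y hXY => by
    by_contra hY
    exact ha (X / Y) (by field_simp; linear_combination hXY)
  unfold cubicNormForm at h
  -- modulo the form, `A² = a B C` and `B² = A C`, so `A³ = a B³`; once `B = 0`, also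
  -- `A = C = 0` and `x₀³ = a x₁³`
  set A := x₀ ^ 2 - a * (x₁ * x₂)
  set B := a * x₂ ^ 2 - x₀ * x₁
  set C := x₁ ^ 2 - x₀ * x₂
  have hB : B = 0 := eq_zero_of_cube_eq A B (by grind)
  have hx₁ : x₁ = 0 := eq_zero_of_cube_eq x₀ x₁ (by grind)
  grind

end CubicNormForm

namespace IsUltrametricDist

variable {E : Type*} [SeminormedAddCommGroup E] [IsUltrametricDist E]

theorem norm_add_eq_max_of_norm_eq_imp_eq_zero {x y : E} (h : ‖x‖ = ‖y‖ → ‖x‖ = 0) :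
    ‖x + y‖ = max ‖x‖ ‖y‖ := by
  by_cases hxy : ‖x‖ = ‖y‖
  · have hmax : max ‖x‖ ‖y‖ = 0 := by rw [← hxy, h hxy, max_self]
    exact hmax ▸ le_antisymm (hmax ▸ norm_add_le_max x y) (norm_nonneg _)
  · exact norm_add_eq_max_of_norm_ne_norm hxy

theorem norm_add_add_sub_eq_max {a b c d : E} (hab : ‖a‖ = ‖b‖ → ‖a‖ = 0)
    (hac : ‖a‖ = ‖c‖ → ‖a‖ = 0) (hbc : ‖b‖ = ‖c‖ → ‖b‖ = 0)
    (hd : ‖d‖ ^ 3 ≤ ‖a‖ * ‖b‖ * ‖c‖) :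
    ‖a + b + c - d‖ = max (max ‖a‖ ‖b‖) ‖c‖ := by
  set M := max (max ‖a‖ ‖b‖) ‖c‖
  have hab' := norm_add_eq_max_of_norm_eq_imp_eq_zero hab
  have habc : ‖a + b + c‖ = M := by
    have habc' : ‖a + b‖ = ‖c‖ → ‖a + b‖ = 0 := by
      rw [hab']
      rcases max_choice ‖a‖ ‖b‖ with h | h <;> rw [h] <;> assumption
    rw [norm_add_eq_max_of_norm_eq_imp_eq_zero habc', hab']
  have haM : ‖a‖ ≤ M := (le_max_left _ _).trans (le_max_left _ _)
  have hbM : ‖b‖ ≤ M := (le_max_right _ _).trans (le_max_left _ _)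
  have hcM : ‖c‖ ≤ M := le_max_right _ _
  rcases (norm_nonneg a).trans haM |>.eq_or_lt with hM | hM
  · have hd0 : ‖d‖ = 0 := by
      rw [le_antisymm (hM ▸ haM) (norm_nonneg a), zero_mul, zero_mul] at hd
      exact pow_eq_zero_iff three_ne_zero |>.mp (le_antisymm hd (by positivity))
    rw [← hM]
    refine le_antisymm ((norm_sub_le _ _).trans ?_) (norm_nonneg _)
    rw [habc, hd0, ← hM, add_zero]
  · -- `‖d‖³ ≤ ‖a‖ ‖b‖ ‖c‖ ≤ M³`, with equality only if `‖a‖ = ‖b‖ = M`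
    have hdM : ‖d‖ < M := by
      by_contra! hMd
      have h1 : M ^ 3 ≤ ‖a‖ * ‖b‖ * ‖c‖ := (pow_le_pow_left₀ hM.le hMd 3).trans hd
      have ha : ‖a‖ = M := by
        nlinarith [mul_le_mul hbM hcM (norm_nonneg c) hM.le, mul_pos hM hM, norm_nonneg a,
          mul_nonneg (norm_nonneg b) (norm_nonneg c)]
      have hb : ‖b‖ = M := by
        nlinarith [mul_le_mul haM hcM (norm_nonneg c) hM.le, mul_pos hM hM, norm_nonneg b,
          mul_nonneg (norm_nonneg a) (norm_nonneg c)]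
      exact hM.ne' (ha ▸ hab (ha.trans hb.symm))
    have hne : ‖a + b + c‖ ≠ ‖-d‖ := by rw [norm_neg, habc]; exact hdM.ne'
    rw [← habc, sub_eq_add_neg, norm_add_eq_max_of_norm_ne_norm hne, norm_neg,
      max_eq_left (habc ▸ hdM.le)]

end IsUltrametricDist

theorem ZMod.natCast_ne_zero_of_prime_ne {p q : ℕ} [Fact p.Prime] (hq : q.Prime) (hpq : p ≠ q) :
    (q : ZMod p) ≠ 0 := by
  rw [Ne, ZMod.natCast_eq_zero_iff, Nat.prime_dvd_prime_iff_eq Fact.out hq]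
  exact hpq

namespace PadicInt

variable {p : ℕ} [Fact p.Prime]

theorem toZMod_eq_zero_iff {x : ℤ_[p]} : toZMod x = 0 ↔ ‖x‖ < 1 := by
  rw [← RingHom.mem_ker, ker_toZMod, IsLocalRing.mem_maximalIdeal, mem_nonunits]

theorem toZMod_ne_zero_iff {x : ℤ_[p]} : toZMod x ≠ 0 ↔ ‖x‖ = 1 := by
  rw [ne_eq, toZMod_eq_zero_iff, not_lt, (norm_le_one x).ge_iff_eq]

theorem exists_pow_eq_of_toZMod_pow_eq {n : ℕ} (hn : (n : ZMod p) ≠ 0) {u : ℤ_[p]}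
    (hu : ‖u‖ = 1) {x : ZMod p} (hx : x ^ n = toZMod u) :
    ∃ c : ℤ_[p], c ^ n = u ∧ toZMod c = x := by
  have hx₀ : x ≠ 0 := by
    rintro rfl
    rw [zero_pow (by rintro rfl; simp at hn)] at hx
    exact toZMod_ne_zero_iff.mpr hu hx.symm
  set c₀ : ℤ_[p] := (x.val : ℤ_[p])
  have hc₀ : toZMod c₀ = x := by simp [c₀]
  have hderiv : ‖aeval c₀ (derivative (X ^ n - C u))‖ = 1 := by
    rw [← toZMod_ne_zero_iff]
    simp [derivative_X_pow, hc₀, hn, hx₀]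
  have hval : ‖aeval c₀ (X ^ n - C u)‖ < ‖aeval c₀ (derivative (X ^ n - C u))‖ ^ 2 := by
    rw [hderiv, one_pow, ← toZMod_eq_zero_iff]
    simp [hc₀, hx]
  obtain ⟨c, hc, hcc₀, -⟩ := hensels_lemma hval
  refine ⟨c, by simpa [sub_eq_zero] using hc, ?_⟩
  rw [hderiv, ← toZMod_eq_zero_iff, map_sub, sub_eq_zero] at hcc₀
  rw [hcc₀, hc₀]

end PadicInt

namespace Padic

variable {p : ℕ} [Fact p.Prime]

theorem exists_isPrimitiveRoot_three (hp : p % 3 = 1) : ∃ ζ : ℚ_[p], IsPrimitiveRoot ζ 3 := by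
  obtain ⟨g, hg⟩ := exists_prime_orderOf_dvd_card (G := (ZMod p)ˣ) 3
    (by rw [ZMod.card_units]; omega)
  have h3 := ZMod.natCast_ne_zero_of_prime_ne (p := p) Nat.prime_three (by omega)
  have hg3 : (g : ZMod p) ^ 3 = toZMod 1 := by
    rw [map_one, ← Units.val_pow_eq_pow_val, ← hg, pow_orderOf_eq_one, Units.val_one]
  obtain ⟨c, hc, hcg⟩ := exists_pow_eq_of_toZMod_pow_eq h3 norm_one hg3
  have hc₁ : c ≠ 1 := by
    rintro rfl
    rw [map_one, eq_comm, ← Units.val_one, Units.val_inj, ← orderOf_eq_one_iff, hg] at hcg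
    omega
  have hζ : IsPrimitiveRoot c 3 := orderOf_eq_prime hc hc₁ ▸ IsPrimitiveRoot.orderOf c
  exact ⟨c, hζ.map_of_injective (f := PadicInt.Coe.ringHom) Subtype.coe_injective⟩

theorem eq_zero_of_norm_pow_eq_zpow_mul {n : ℕ} [NeZero n] {k : ℤ} (hk : ¬ (n : ℤ) ∣ k)
    {x y : ℚ_[p]} (h : ‖x‖ ^ n = (p : ℝ) ^ k * ‖y‖ ^ n) : x = 0 := by
  by_contra hx
  have hy : y ≠ 0 := by
    rintro rfl
    simp_all [zero_pow (NeZero.ne n)]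
  rw [norm_eq_zpow_neg_valuation hx, norm_eq_zpow_neg_valuation hy, ← zpow_natCast,
    ← zpow_natCast, ← zpow_mul, ← zpow_mul,
    ← zpow_add₀ (by simp [(Fact.out : p.Prime).ne_zero])] at h
  have := zpow_right_injective₀ (by exact_mod_cast (Fact.out : p.Prime).pos)
    (by exact_mod_cast (Fact.out : p.Prime).ne_one) h
  exact hk ⟨y.valuation - x.valuation, by linarith⟩

theorem norm_pow_three_ne_norm_mul_pow_three {b : ℚ_[p]} (hb : ¬ (3 : ℤ) ∣ b.valuation)
    {x : ℚ_[p]} (hx : x ≠ 0) (y : ℚ_[p]) : ‖x ^ 3‖ ≠ ‖b * y ^ 3‖ := fun h => by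
  have hb₀ : b ≠ 0 := by rintro rfl; simp at hb
  rw [norm_pow, norm_mul, norm_pow, norm_eq_zpow_neg_valuation hb₀] at h
  exact hx (eq_zero_of_norm_pow_eq_zpow_mul (n := 3) (by omega) h)

theorem norm_three_mul_pow_three_le (a x₀ x₁ x₂ : ℚ_[p]) :
    ‖3 * a * (x₀ * x₁ * x₂)‖ ^ 3 ≤ ‖x₀ ^ 3‖ * ‖a * x₁ ^ 3‖ * ‖a ^ 2 * x₂ ^ 3‖ := by
  have h3 : ‖(3 : ℚ_[p])‖ ≤ 1 := by exact_mod_cast norm_int_le_one (p := p) 3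
  rw [show ‖3 * a * (x₀ * x₁ * x₂)‖ ^ 3 =
      ‖(3 : ℚ_[p])‖ ^ 3 * (‖x₀ ^ 3‖ * ‖a * x₁ ^ 3‖ * ‖a ^ 2 * x₂ ^ 3‖) by
    simp only [norm_mul, norm_pow]; ring]
  exact mul_le_of_le_one_left (by positivity) (pow_le_one₀ (norm_nonneg _) h3)

theorem norm_cubicNormForm_eq_max {a : ℚ_[p]} (ha : ¬ (3 : ℤ) ∣ a.valuation) (x₀ x₁ x₂ : ℚ_[p]) :
    ‖cubicNormForm a x₀ x₁ x₂‖ = max (max ‖x₀ ^ 3‖ ‖a * x₁ ^ 3‖) ‖a ^ 2 * x₂ ^ 3‖ := by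
  have ha₀ : a ≠ 0 := by rintro rfl; simp at ha
  have ha₂ : ¬ (3 : ℤ) ∣ (a ^ 2).valuation := by rw [valuation_pow]; omega
  refine IsUltrametricDist.norm_add_add_sub_eq_max ?_ ?_ ?_ (norm_three_mul_pow_three_le ..)
  · exact fun h => by_contra fun h₀ =>
      norm_pow_three_ne_norm_mul_pow_three ha (by simpa using h₀) x₁ h
  · exact fun h => by_contra fun h₀ =>
      norm_pow_three_ne_norm_mul_pow_three ha₂ (by simpa using h₀) x₂ h
  · intro h
    by_contra h₀
    rw [norm_mul, pow_two, mul_assoc, norm_mul, mul_right_inj' (norm_ne_zero_iff.mpr ha₀)] at h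
    exact norm_pow_three_ne_norm_mul_pow_three ha (by rintro rfl; simp at h₀) x₂ h

theorem norm_eq_one_and_norm_sub_cube_lt_one {a : ℚ_[p]} (ha : ¬ (3 : ℤ) ∣ a.valuation)
    {u x₀ x₁ x₂ : ℚ_[p]} (hu : ‖u‖ = 1) (h : cubicNormForm a x₀ x₁ x₂ = u) :
    ‖x₀‖ = 1 ∧ ‖u - x₀ ^ 3‖ < 1 := by
  have ha₂ : ¬ (3 : ℤ) ∣ (a ^ 2).valuation := by rw [valuation_pow]; omega
  have hmax := norm_cubicNormForm_eq_max ha x₀ x₁ x₂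
  rw [h, hu] at hmax
  have hn₁ : ‖a * x₁ ^ 3‖ ≠ 1 := by
    simpa using (norm_pow_three_ne_norm_mul_pow_three ha one_ne_zero x₁).symm
  have hn₂ : ‖a ^ 2 * x₂ ^ 3‖ ≠ 1 := by
    simpa using (norm_pow_three_ne_norm_mul_pow_three ha₂ one_ne_zero x₂).symm
  have hn₀ : ‖x₀ ^ 3‖ = 1 := by grind
  have hlt₁ : ‖a * x₁ ^ 3‖ < 1 := by grind
  have hlt₂ : ‖a ^ 2 * x₂ ^ 3‖ < 1 := by grind
  have hlt₃ : ‖3 * a * (x₀ * x₁ * x₂)‖ < 1 := by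
    refine lt_of_pow_lt_pow_left₀ 3 zero_le_one ((norm_three_mul_pow_three_le ..).trans_lt ?_)
    rw [hn₀, one_mul, one_pow]
    exact mul_lt_one_of_nonneg_of_lt_one_left (norm_nonneg _) hlt₁ hlt₂.le
  refine ⟨by rwa [norm_pow, pow_eq_one_iff_of_nonneg (norm_nonneg _) three_ne_zero] at hn₀, ?_⟩
  rw [← h, cubicNormForm, show ∀ y z w : ℚ_[p], x₀ ^ 3 + y + z - w - x₀ ^ 3 = y + z + -w by
    intros; ring]
  refine (IsUltrametricDist.norm_add_le_max _ _).trans_lt (max_lt ?_ (by rwa [norm_neg]))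
  exact (IsUltrametricDist.norm_add_le_max _ _).trans_lt (max_lt hlt₁ hlt₂)

theorem exists_pow_three_eq_toZMod_of_cubicNormForm_eq {a : ℚ_[p]}
    (ha : ¬ (3 : ℤ) ∣ a.valuation) (u : ℤ_[p]ˣ) {x₀ x₁ x₂ : ℚ_[p]}
    (h : cubicNormForm a x₀ x₁ x₂ = u) : ∃ x : ZMod p, x ^ 3 = toZMod (u : ℤ_[p]) := by
  obtain ⟨hx₀, hlt⟩ := norm_eq_one_and_norm_sub_cube_lt_one ha (norm_units u) h
  obtain ⟨z, rfl⟩ : ∃ z : ℤ_[p], (z : ℚ_[p]) = x₀ := ⟨⟨x₀, hx₀.le⟩, rfl⟩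
  refine ⟨toZMod z, ?_⟩
  rw [← map_pow, eq_comm, ← sub_eq_zero, ← map_sub, toZMod_eq_zero_iff, PadicInt.norm_def]
  simpa using hlt

theorem exists_norm_cubicNormForm_eq_norm_pow_three {b : ℤ_[p]}
    (hb : ∀ x : ZMod p, x ^ 3 ≠ toZMod b) (x₀ x₁ x₂ : ℚ_[p]) :
    ∃ y : ℚ_[p], ‖cubicNormForm (b : ℚ_[p]) x₀ x₁ x₂‖ = ‖y‖ ^ 3 := by
  classical
  obtain ⟨m, hm, hmax⟩ := Finset.exists_max_image {x₀, x₁, x₂} norm (by simp)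
  simp only [Finset.mem_insert, Finset.mem_singleton, forall_eq_or_imp, forall_eq] at hm hmax
  by_cases hm₀ : m = 0
  · refine ⟨0, ?_⟩
    simp_all [cubicNormForm]
  refine ⟨m, ?_⟩
  -- rescale by the coordinate of largest norm to get a primitive vector over `ℤ_[p]`
  have hscale : ∀ x : ℚ_[p], ‖x‖ ≤ ‖m‖ → ∃ z : ℤ_[p], Coe.ringHom z = m⁻¹ * x := fun x hx =>
    ⟨⟨m⁻¹ * x, by rw [norm_mul, norm_inv]; exact inv_mul_le_one_of_le₀ hx (norm_nonneg _)⟩, rfl⟩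
  obtain ⟨z₀, hz₀⟩ := hscale x₀ hmax.1
  obtain ⟨z₁, hz₁⟩ := hscale x₁ hmax.2.1
  obtain ⟨z₂, hz₂⟩ := hscale x₂ hmax.2.2
  have hz : toZMod (cubicNormForm b z₀ z₁ z₂) ≠ 0 := by
    rw [map_cubicNormForm, Ne, cubicNormForm_eq_zero_iff hb]
    have hnorm (z : ℤ_[p]) : ‖z‖ = ‖Coe.ringHom z‖ := rfl
    simp only [toZMod_eq_zero_iff, hnorm, hz₀, hz₁, hz₂]
    rcases hm with rfl | rfl | rfl <;> simp [hm₀]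
  replace hz : ‖Coe.ringHom (cubicNormForm b z₀ z₁ z₂)‖ = 1 := toZMod_ne_zero_iff.mp hz
  rw [map_cubicNormForm, hz₀, hz₁, hz₂, cubicNormForm_mul] at hz
  rw [norm_mul, norm_pow, norm_inv, inv_pow, inv_mul_eq_one₀ (by simpa using hm₀)] at hz
  exact hz.symm

theorem cubicNormForm_ne_p_mul_unit (hp : p ≠ 3) {a : ℚ_[p]} (ha : (3 : ℤ) ∣ a.valuation)
    (hnc : ∀ c : ℚ_[p], c ^ 3 ≠ a) (x₀ x₁ x₂ : ℚ_[p]) (v : ℤ_[p]ˣ) :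
    cubicNormForm a x₀ x₁ x₂ ≠ p * v := by
  have ha₀ : a ≠ 0 := fun h₀ => hnc 0 (by simp [h₀])
  obtain ⟨q, hq⟩ := ha
  -- `a = t³ b` with `t = p ^ q` and `b` a unit
  set t : ℚ_[p] := (p : ℚ_[p]) ^ q
  have hp₀ : (0 : ℝ) < p := by exact_mod_cast (Fact.out : p.Prime).pos
  have ht : ‖t‖ = (p : ℝ) ^ (-q) := norm_p_zpow q
  have ht₀ : t ≠ 0 := norm_ne_zero_iff.mp (ht ▸ (zpow_pos hp₀ _).ne')
  have hb : ‖a / t ^ 3‖ = 1 := by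
    rw [norm_div, norm_pow, ht, norm_eq_zpow_neg_valuation ha₀, hq, ← zpow_natCast, ← zpow_mul,
      div_eq_one_iff_eq (zpow_pos hp₀ _).ne']
    ring_nf
  obtain ⟨b, hb'⟩ : ∃ b : ℤ_[p], (b : ℚ_[p]) = a / t ^ 3 := ⟨⟨_, hb.le⟩, rfl⟩
  have ha' : a = t ^ 3 * b := by
    rw [hb', mul_div_cancel₀ _ (pow_ne_zero _ ht₀)]
  have hbnc : ∀ x : ZMod p, x ^ 3 ≠ toZMod b := fun x hx => by
    obtain ⟨c, hc, -⟩ := exists_pow_eq_of_toZMod_pow_eq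
      (ZMod.natCast_ne_zero_of_prime_ne Nat.prime_three hp) (by rwa [PadicInt.norm_def, hb']) hx
    exact hnc (t * c) (by rw [ha', mul_pow, ← hc]; push_cast; ring)
  intro h
  obtain ⟨y, hy⟩ := exists_norm_cubicNormForm_eq_norm_pow_three hbnc x₀ (t * x₁) (t ^ 2 * x₂)
  rw [← cubicNormForm_mul_cube, ← ha', h, norm_mul, norm_p, ← PadicInt.norm_def, norm_units,
    mul_one] at hy
  have hy₀ := eq_zero_of_norm_pow_eq_zpow_mul (n := 3) (k := -1) (y := 1) (by omega)
    (by rw [← hy, norm_one, one_pow, mul_one, zpow_neg_one])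
  simp [hy₀, (Fact.out : p.Prime).ne_zero] at hy

end Padic

theorem IsPrimitiveRoot.exists_eq_pow_mul_of_pow_eq_pow {K : Type*} [Field K] {n : ℕ} [NeZero n]
    {z x y : K} (hz : IsPrimitiveRoot z n) (h : x ^ n = y ^ n) : ∃ i < n, x = z ^ i * y := by
  rcases eq_or_ne y 0 with rfl | hy
  · refine ⟨0, Nat.pos_of_neZero n, ?_⟩
    rw [mul_zero, ← pow_eq_zero_iff (NeZero.ne n), h, zero_pow (NeZero.ne n)]
  · obtain ⟨i, hi, hzi⟩ := hz.eq_pow_of_pow_eq_one (ξ := x / y)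
      (by rw [div_pow, h, div_self (pow_ne_zero _ hy)])
    exact ⟨i, hi, by rw [hzi, div_mul_cancel₀ _ hy]⟩

section Kummer

variable {F K : Type*} [Field F] [Field K] [Algebra F K]

theorem pow_ne_of_adjoin_simple_eq_top {n : ℕ} [NeZero n] (hrank : Module.finrank F K ≠ 1)
    {ζ : F} (hζ : IsPrimitiveRoot ζ n) {θ : K} {a : F} (hθ : F⟮θ⟯ = ⊤)
    (hθa : θ ^ n = algebraMap F K a) (c : F) : c ^ n ≠ a := by
  rintro rfl
  have hz := hζ.map_of_injective (algebraMap F K).injective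
  obtain ⟨i, -, hi⟩ := hz.exists_eq_pow_mul_of_pow_eq_pow (x := θ) (y := algebraMap F K c)
    (by rw [hθa, map_pow])
  have hθ_bot : θ ∈ (⊥ : IntermediateField F K) := by
    rw [hi, ← map_pow, ← map_mul]
    exact IntermediateField.algebraMap_mem _ _
  apply hrank
  rw [← IntermediateField.finrank_top', ← hθ, adjoin_simple_eq_bot_iff.mpr hθ_bot,
    IntermediateField.finrank_bot]

variable [FiniteDimensional F K]

theorem exists_adjoin_simple_eq_top_pow_eq [IsGalois F K] {n : ℕ} (hn : n.Prime)
    (hrank : Module.finrank F K = n) {ζ : F} (hζ : IsPrimitiveRoot ζ n) :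
    ∃ (θ : K) (a : F), F⟮θ⟯ = ⊤ ∧ θ ^ n = algebraMap F K a := by
  have : Fact n.Prime := ⟨hn⟩
  have : IsCyclic (K ≃ₐ[F] K) :=
    isCyclic_of_prime_card (by rw [IsGalois.card_aut_eq_finrank, hrank])
  obtain ⟨θ, ⟨a, ha⟩, hθ⟩ := exists_root_adjoin_eq_top_of_isCyclic F K
    ⟨ζ, by rw [hrank]; exact (mem_primitiveRoots hn.pos).mpr hζ⟩
  exact ⟨θ, a, hθ, by rw [← hrank, ha]⟩

theorem prod_algEquiv_apply_eq_prod_range [IsGalois F K] {n : ℕ}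
    (hrank : Module.finrank F K = n) {ζ : F} (hζ : IsPrimitiveRoot ζ n) {θ : K} (hθ : F⟮θ⟯ = ⊤)
    (hθn : θ ^ n ∈ Set.range (algebraMap F K)) (f : K → K) :
    ∏ σ : K ≃ₐ[F] K, f (σ θ) = ∏ i ∈ Finset.range n, f (algebraMap F K ζ ^ i * θ) := by
  classical
  have : NeZero n := ⟨hrank ▸ Module.finrank_pos.ne'⟩
  have hz := hζ.map_of_injective (algebraMap F K).injective
  have hinj : Function.Injective fun σ : K ≃ₐ[F] K => σ θ := fun σ τ h =>
    AlgEquiv.coe_toAlgHom_injective <| AlgHom.ext_of_adjoin_eq_top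
      (IntermediateField.adjoin_eq_top_iff.mp hθ) (by simpa using h)
  -- each `σ θ` is an `n`-th root of `θ ^ n`, and there are exactly `n` automorphisms
  have hsub : Finset.univ.image (fun σ : K ≃ₐ[F] K => σ θ) ⊆
      (Finset.range n).image fun i => algebraMap F K ζ ^ i * θ := by
    intro t ht
    obtain ⟨σ, -, rfl⟩ := Finset.mem_image.mp ht
    obtain ⟨a, ha⟩ := hθn
    obtain ⟨i, hi, h⟩ := hz.exists_eq_pow_mul_of_pow_eq_pow (x := σ θ) (y := θ)
      (by rw [← map_pow, ← ha, AlgEquiv.commutes])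
    exact Finset.mem_image.mpr ⟨i, Finset.mem_range.mpr hi, h.symm⟩
  have hcard : (Finset.univ.image fun σ : K ≃ₐ[F] K => σ θ).card = n := by
    rw [Finset.card_image_of_injective _ hinj, Finset.card_univ, ← Nat.card_eq_fintype_card,
      IsGalois.card_aut_eq_finrank, hrank]
  have himage := Finset.eq_of_subset_of_card_le hsub
    (by rw [hcard]; exact Finset.card_image_le.trans (Finset.card_range n).le)
  have hinjOn : Set.InjOn (fun i => algebraMap F K ζ ^ i * θ) (Finset.range n) :=
    Finset.card_image_iff.mp (by rw [← himage, hcard, Finset.card_range])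
  rw [← Finset.prod_image hinjOn, ← himage, Finset.prod_image hinj.injOn]

theorem exists_eq_add_mul_add_mul_sq (hrank : Module.finrank F K = 3) {θ : K} (hθ : F⟮θ⟯ = ⊤)
    (y : K) : ∃ c₀ c₁ c₂ : F,
      y = algebraMap F K c₀ + algebraMap F K c₁ * θ + algebraMap F K c₂ * θ ^ 2 := by
  let pb := PowerBasis.ofAdjoinEqTop (IsIntegral.of_finite F θ)
    (IntermediateField.adjoin_eq_top_iff.mp hθ)
  obtain ⟨f, hf, rfl⟩ := pb.exists_eq_aeval y
  rw [← pb.finrank, hrank] at hf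
  refine ⟨f.coeff 0, f.coeff 1, f.coeff 2, ?_⟩
  rw [PowerBasis.ofAdjoinEqTop_gen, aeval_eq_sum_range' hf]
  simp [Finset.sum_range_succ, Algebra.smul_def]

theorem Algebra.norm_eq_cubicNormForm [IsGalois F K] (hrank : Module.finrank F K = 3) {ζ : F}
    (hζ : IsPrimitiveRoot ζ 3) {θ : K} {a : F} (hθ : F⟮θ⟯ = ⊤) (hθa : θ ^ 3 = algebraMap F K a)
    (c₀ c₁ c₂ : F) :
    Algebra.norm F (algebraMap F K c₀ + algebraMap F K c₁ * θ + algebraMap F K c₂ * θ ^ 2) =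
      cubicNormForm a c₀ c₁ c₂ := by
  have hz : algebraMap F K ζ ^ 2 + algebraMap F K ζ + 1 = 0 := by
    have := (hζ.map_of_injective (algebraMap F K).injective).geom_sum_eq_zero (by norm_num)
    simp only [Finset.sum_range_succ, Finset.sum_range_zero, pow_zero, pow_one, zero_add] at this
    linear_combination this
  apply (algebraMap F K).injective
  rw [Algebra.norm_eq_prod_automorphisms, map_cubicNormForm]
  simp only [map_add, map_mul, map_pow, AlgEquiv.commutes]
  rw [prod_algEquiv_apply_eq_prod_range hrank hζ hθ ⟨a, hθa.symm⟩
    fun t => algebraMap F K c₀ + algebraMap F K c₁ * t + algebraMap F K c₂ * t ^ 2]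
  exact prod_range_three_eq_cubicNormForm hz hθa _ _ _

theorem exists_norm_eq_cubicNormForm [IsGalois F K] (hrank : Module.finrank F K = 3) {ζ : F}
    (hζ : IsPrimitiveRoot ζ 3) {θ : K} {a : F} (hθ : F⟮θ⟯ = ⊤) (hθa : θ ^ 3 = algebraMap F K a)
    (y : K) : ∃ c₀ c₁ c₂ : F, Algebra.norm F y = cubicNormForm a c₀ c₁ c₂ := by
  obtain ⟨c₀, c₁, c₂, rfl⟩ := exists_eq_add_mul_add_mul_sq hrank hθ y
  exact ⟨c₀, c₁, c₂, Algebra.norm_eq_cubicNormForm hrank hζ hθ hθa c₀ c₁ c₂⟩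

end Kummer

theorem unit_norm_totally_ramified_iff_general (p : ℕ) [Fact p.Prime] (hp3 : p % 3 = 1)
    (K : Type*) [Field K] [Algebra ℚ_[p] K] [FiniteDimensional ℚ_[p] K]
    [IsGalois ℚ_[p] K] (hrank : Module.finrank ℚ_[p] K = 3)
    (htr : ∃ π : K, ∃ v : ℤ_[p]ˣ,
      Algebra.norm ℚ_[p] π = (p : ℚ_[p]) * ((v : ℤ_[p]) : ℚ_[p]))
    (u : ℤ_[p]ˣ) :
    (∃ y : K, Algebra.norm ℚ_[p] y = (((u : ℤ_[p]) : ℚ_[p]))) ↔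
      ∃ x : ZMod p, x ^ 3 = PadicInt.toZMod (u : ℤ_[p]) := by
  have hp : p ≠ 3 := by omega
  obtain ⟨ζ, hζ⟩ := Padic.exists_isPrimitiveRoot_three hp3
  obtain ⟨θ, a, hθ, hθa⟩ := exists_adjoin_simple_eq_top_pow_eq Nat.prime_three hrank hζ
  constructor
  · rintro ⟨y, hy⟩
    by_cases ha : (3 : ℤ) ∣ a.valuation
    · obtain ⟨π, v, hπ⟩ := htr
      obtain ⟨d₀, d₁, d₂, hd⟩ := exists_norm_eq_cubicNormForm hrank hζ hθ hθa π
      exact absurd (hd ▸ hπ) <| Padic.cubicNormForm_ne_p_mul_unit hp ha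
        (pow_ne_of_adjoin_simple_eq_top (by omega) hζ hθ hθa) d₀ d₁ d₂ v
    · obtain ⟨c₀, c₁, c₂, hc⟩ := exists_norm_eq_cubicNormForm hrank hζ hθ hθa y
      exact Padic.exists_pow_three_eq_toZMod_of_cubicNormForm_eq ha u (hc ▸ hy)
  · rintro ⟨x, hx⟩
    obtain ⟨c, hc, -⟩ := exists_pow_eq_of_toZMod_pow_eq
      (ZMod.natCast_ne_zero_of_prime_ne Nat.prime_three hp) (norm_units u) hx
    exact ⟨algebraMap ℚ_[p] K c, by rw [Algebra.norm_algebraMap, hrank, ← hc]; push_cast; rfl⟩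

/-- Let `K/ℚ_p` be a totally ramified abelian cubic extension, where `p ≡ 1 (mod 3)`.
(Total ramification is expressed by the existence of an element of `K` whose norm is
`p` times a unit of `ℤ_p`.)  A `p`-adic unit `u` is a norm from `K^*` if and only if
its reduction mod `p` is a cube in `F_p^*`. -/
theorem unit_norm_totally_ramified_iff (p : ℕ) [Fact p.Prime] (hp3 : p % 3 = 1)
    (K : Type*) [Field K] [Algebra ℚ_[p] K] [FiniteDimensional ℚ_[p] K]
    [IsGalois ℚ_[p] K] (hrank : Module.finrank ℚ_[p] K = 3)
    (habelian : ∀ σ τ : K ≃ₐ[ℚ_[p]] K, σ * τ = τ * σ)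
    (htr : ∃ π : K, ∃ v : ℤ_[p]ˣ,
      Algebra.norm ℚ_[p] π = (p : ℚ_[p]) * ((v : ℤ_[p]) : ℚ_[p]))
    (u : ℤ_[p]ˣ) :
    (∃ y : K, Algebra.norm ℚ_[p] y = (((u : ℤ_[p]) : ℚ_[p]))) ↔
      ∃ x : ZMod p, x ^ 3 = PadicInt.toZMod (u : ℤ_[p]) :=
  unit_norm_totally_ramified_iff_general p hp3 K hrank htr u
end

section
/- Let X be a cubic surface over F_q given by Q(T_0,T_1,T_2)·T_3 + K(T_0,T_1,T_2) = 0 with Q a quadratic form not identically zero and K a cubic form, and suppose x = (0:0:0:1) lies on X. If x is a singular point of X, then X has a smooth F_q-rational point. -/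
/-!
Pick `a ∈ F_q³` with `Q(a) ≠ 0`; it exists because `Q` is a nonzero form of degree `2 ≤ q`.
On the line through `x` and `(a : 0)` the equation of `X` becomes linear in `T₃`, with
leading coefficient `Q(a)`, so the line meets `X` again at `y = (a : -K(a)/Q(a))`.
Since `∂F/∂T₃ = Q` and `Q(y) = Q(a) ≠ 0`, the point `y` is smooth.
-/

open MvPolynomial

/-- The homogeneous cubic `F = Q·T₃ + K` defining the surface `X ⊂ P³`. -/
noncomputable def surfacePoly {q : ℕ} (Q K : MvPolynomial (Fin 3) (ZMod q)) :
    MvPolynomial (Fin 4) (ZMod q) :=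
  rename Fin.castSucc Q * X 3 + rename Fin.castSucc K

namespace MvPolynomial

variable {R σ τ : Type*}

theorem pderiv_rename_of_notMem_range [CommSemiring R] {f : σ → τ} {i : τ}
    (hi : i ∉ Set.range f) (p : MvPolynomial σ R) : pderiv i (rename f p) = 0 := by
  classical
  refine pderiv_eq_zero_of_notMem_vars fun hvars => hi ?_
  obtain ⟨j, -, rfl⟩ := Finset.mem_image.mp (vars_rename f p hvars)
  exact ⟨j, rfl⟩

theorem IsHomogeneous.eval_zero_eq_zero [CommSemiring R] {p : MvPolynomial σ R} {n : ℕ}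
    (hp : p.IsHomogeneous n) (hn : n ≠ 0) : eval 0 p = 0 := by
  rw [eval_zero, constantCoeff_eq]
  exact hp.coeff_eq_zero (by simpa using hn.symm)

theorem IsHomogeneous.exists_eval_ne_zero_of_le_card [CommRing R] [IsDomain R]
    {p : MvPolynomial σ R} {n : ℕ} (hp : p.IsHomogeneous n) (hp0 : p ≠ 0)
    (hn : n ≤ Cardinal.mk R) : ∃ a, eval a p ≠ 0 := by
  by_contra! h
  exact hp0 (hp.eq_zero_of_forall_eval_eq_zero_of_le_card h hn)

end MvPolynomial

section surfacePoly

variable {q : ℕ} (Q K : MvPolynomial (Fin 3) (ZMod q))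

theorem eval_snoc_surfacePoly (a : Fin 3 → ZMod q) (t : ZMod q) :
    eval (Fin.snoc a t) (surfacePoly Q K) = eval a Q * t + eval a K := by
  simp only [surfacePoly, map_add, map_mul, eval_X, eval_rename, Fin.snoc_comp_castSucc]
  rfl

theorem pderiv_three_surfacePoly : pderiv 3 (surfacePoly Q K) = rename Fin.castSucc Q := by
  have hlast : (3 : Fin 4) ∉ Set.range (Fin.castSucc : Fin 3 → Fin 4) := by
    rintro ⟨i, hi⟩
    exact (Fin.castSucc_lt_last i).ne hi
  simp [surfacePoly, pderiv_rename_of_notMem_range hlast]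

end surfacePoly

theorem smooth_point_exists_general (q : ℕ) [Fact q.Prime]
    (Q K : MvPolynomial (Fin 3) (ZMod q))
    (hQ : Q.IsHomogeneous 2) (hQ0 : Q ≠ 0) :
    ∃ y : Fin 4 → ZMod q, y ≠ 0 ∧ eval y (surfacePoly Q K) = 0 ∧
      ∃ i : Fin 4, eval y (pderiv i (surfacePoly Q K)) ≠ 0 := by
  have hcard : (2 : Cardinal) ≤ Cardinal.mk (ZMod q) := by
    rw [Cardinal.mk_fintype, ZMod.card]
    exact_mod_cast (Fact.out : q.Prime).two_le
  obtain ⟨a, ha⟩ := hQ.exists_eval_ne_zero_of_le_card hQ0 hcard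
  have ha0 : a ≠ 0 := by
    rintro rfl
    exact ha (hQ.eval_zero_eq_zero two_ne_zero)
  refine ⟨Fin.snoc a (-eval a K / eval a Q), ?_, ?_, 3, ?_⟩
  · intro hy
    exact ha0 (funext fun i => by simpa using congrFun hy i.castSucc)
  · rw [eval_snoc_surfacePoly]
    field_simp
    ring
  · rwa [pderiv_three_surfacePoly, eval_rename, Fin.snoc_comp_castSucc]

/-- Let `X ⊂ P³` over `F_q` be given by `Q(T₀,T₁,T₂)·T₃ + K(T₀,T₁,T₂) = 0` with `Q` a
nonzero quadratic form and `K` a cubic form.  The point `x = (0:0:0:1)` lies on `X`; if it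
is singular, then `X` has a smooth `F_q`-rational point. -/
theorem smooth_point_exists (q : ℕ) [Fact q.Prime]
    (Q K : MvPolynomial (Fin 3) (ZMod q))
    (hQ : Q.IsHomogeneous 2) (hQ0 : Q ≠ 0) (hK : K.IsHomogeneous 3)
    (hxX : eval (fun i : Fin 4 => if i = 3 then 1 else 0) (surfacePoly Q K) = 0)
    (hsing : ∀ i : Fin 4,
      eval (fun j : Fin 4 => if j = 3 then 1 else 0) (pderiv i (surfacePoly Q K)) = 0) :
    ∃ y : Fin 4 → ZMod q, y ≠ 0 ∧ eval y (surfacePoly Q K) = 0 ∧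
      ∃ i : Fin 4, eval y (pderiv i (surfacePoly Q K)) ≠ 0 :=
  smooth_point_exists_general q Q K hQ hQ0
end
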